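/- arXiv:1601.06327 — 3 statements merged into one kernel-verified Lean document; each statement's English description precedes it below -/
import Mathlib

section
/- A 1×n array whose single row is a permutation of {1,...,n} is a Latin rectangle, and any k×n Latin rectangle with k < n can be extended to a (k+1)×n Latin rectangle (by Hall's marriage theorem). -/
/-!
Put symbol `s` adjacent to column `j` when `s` does not yet occur in column `j`. In a `k × n`
Latin rectangle every column misses exactly `n - k` symbols, and every symbol, occurring once
in each row and in distinct columns, is missing from exactly `n - k` columns. A bipartite graph
that is regular of positive degree satisfies Hall's condition by double counting, so it has a
perfect matching, which is a new row.
-/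

open Finset Function

theorem Fintype.exists_injective_of_degree_le_degree {α β : Type*} [Fintype α] [Fintype β]
    (r : α → β → Prop) [DecidableRel r] {d : ℕ} (hd : 0 < d)
    (hα : ∀ a, d ≤ #{b | r a b}) (hβ : ∀ b, #{a | r a b} ≤ d) :
    ∃ f : α → β, Injective f ∧ ∀ a, r a (f a) := by
  refine (Fintype.all_card_le_filter_rel_iff_exists_injective r).mp fun A ↦ ?_
  refine Nat.le_of_mul_le_mul_right (card_mul_le_card_mul r (fun a ha ↦ ?_) fun b _ ↦ ?_) hd
  · refine (hα a).trans (card_le_card fun b hb ↦ ?_)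
    rw [mem_filter] at hb
    simp only [bipartiteAbove, mem_filter, mem_univ, true_and]
    exact ⟨⟨a, ha, hb.2⟩, hb.2⟩
  · exact (card_le_card (filter_subset_filter _ (subset_univ A))).trans (hβ b)

namespace LatinRectangle

-- The decidability instance is a parameter so that these lemmas match whichever instance the
-- caller synthesizes (for `Fin` columns it is `Nat.decidableForallFin`, not the `Fintype` one).
variable {ι α β : Type*} [Fintype ι] {L : ι → α → β}
  [DecidableRel fun (j : α) (s : β) ↦ ∀ i, L i j ≠ s]

theorem card_missing_symbols [Fintype β] [DecidableEq β] (hcol : ∀ j, Injective fun i ↦ L i j)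
    (j : α) : #{s | ∀ i, L i j ≠ s} = Fintype.card β - Fintype.card ι := by
  have : ({s | ∀ i, L i j ≠ s} : Finset β) = (univ.image fun i ↦ L i j)ᶜ := by
    ext s
    simp
  rw [this, card_compl, card_image_of_injective _ (hcol j), card_univ]

theorem card_columns_missing_symbol [Fintype α] [DecidableEq α] (hrow : ∀ i, Bijective (L i))
    (hcol : ∀ j, Injective fun i ↦ L i j) (s : β) :
    #{j | ∀ i, L i j ≠ s} = Fintype.card α - Fintype.card ι := by
  let pos i : α := (Equiv.ofBijective (L i) (hrow i)).symm s
  have hpos i : L i (pos i) = s := Equiv.ofBijective_apply_symm_apply (L i) (hrow i) s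
  have hpos_inj : Injective pos := fun a b hab ↦ hcol (pos a) ((hpos a).trans (hab ▸ hpos b).symm)
  have : ({j | ∀ i, L i j ≠ s} : Finset α) = (univ.image pos)ᶜ := by
    ext j
    simp only [mem_filter, mem_univ, true_and, mem_compl, mem_image, not_exists]
    refine forall_congr' fun i ↦ ⟨fun h hj ↦ h (hj ▸ hpos i), fun h hj ↦ h ?_⟩
    exact (Equiv.symm_apply_eq _).mpr hj.symm
  rw [this, card_compl, card_image_of_injective _ hpos_inj, card_univ]

end LatinRectangle

/-- A single permutation row is a Latin rectangle, and every k×n Latin rectangle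
with k < n extends to a (k+1)×n Latin rectangle: there is a bijective new row
avoiding, in each column, all symbols already present in that column. -/
theorem stmt_14 (n k : ℕ) (hk : k < n)
    (L : Fin k → Fin n → Fin n)
    (hrow : ∀ i, Function.Bijective (L i))
    (hcol : ∀ j : Fin n, Function.Injective (fun i => L i j)) :
    (∀ r : Fin n → Fin n, Function.Bijective r →
      ((∀ i : Fin 1, Function.Bijective (fun j : Fin n => r j)) ∧
       (∀ j : Fin n, Function.Injective (fun _ : Fin 1 => r j)))) ∧
    (∃ r : Fin n → Fin n, Function.Bijective r ∧ ∀ j i, L i j ≠ r j) := by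
  refine ⟨fun r hr ↦ ⟨fun _ ↦ hr, fun _ _ _ _ ↦ Subsingleton.elim _ _⟩, ?_⟩
  have hd : 0 < Fintype.card (Fin n) - Fintype.card (Fin k) := by simpa using hk
  obtain ⟨r, hr_inj, hr⟩ := Fintype.exists_injective_of_degree_le_degree
    (fun j s ↦ ∀ i, L i j ≠ s) hd (fun j ↦ (LatinRectangle.card_missing_symbols hcol j).ge)
    fun s ↦ (LatinRectangle.card_columns_missing_symbol hrow hcol s).le
  exact ⟨r, Finite.injective_iff_bijective.mp hr_inj, hr⟩
end

section
/- The bipartite 'missing symbol' relation of a k×n Latin rectangle with k < n satisfies Hall's condition: for every finite set A of columns, the set of symbols missing from at least one column of A has size at least |A|. -/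
/-!
Every column of the rectangle misses exactly `n - k` symbols, and every symbol, occurring once
in each of the `k` rows and never twice in a column, is missing from exactly `n - k` columns.
Double counting the missing pairs between a set `A` of columns and the symbols missing from
some column of `A` then gives `(n - k) * |A| ≤ (n - k) * |⋃_{j ∈ A} Miss j|`, and `n - k > 0`.
-/

open Finset

theorem Finset.card_le_card_biUnion_of_degree_le {α β : Type*} [Fintype α] [DecidableEq α]
    [DecidableEq β] (N : α → Finset β) {d : ℕ} (hd : 0 < d) (hleft : ∀ a, d ≤ #(N a))
    (hright : ∀ b, #{a | b ∈ N a} ≤ d) (A : Finset α) : #A ≤ #(A.biUnion N) := by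
  have hcount : #A * d ≤ #(A.biUnion N) * d := by
    refine card_mul_le_card_mul (fun a b ↦ b ∈ N a) (fun a ha ↦ ?_) (fun b _ ↦ ?_)
    · rw [bipartiteAbove, filter_mem_eq_inter, inter_eq_right.mpr (subset_biUnion_of_mem N ha)]
      exact hleft a
    · exact (card_le_card (monotone_filter_left _ (subset_univ A))).trans (hright b)
  exact Nat.le_of_mul_le_mul_right hcount hd

theorem Fintype.card_sub_card_le_card_filter_forall_ne {ι β : Type*} [Fintype ι] [Fintype β]
    [DecidableEq β] (f : ι → β) : card β - card ι ≤ #{b | ∀ i, f i ≠ b} := by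
  have hcompl : ({b | ∀ i, f i ≠ b} : Finset β) = (univ.image f)ᶜ := by
    ext b
    simp
  rw [hcompl, card_compl]
  exact Nat.sub_le_sub_left card_image_le _

theorem Fintype.card_filter_forall_ne_le_card_sub {ι α β : Type*} [Fintype ι] [Fintype α]
    [DecidableEq α] [DecidableEq β] (L : ι → α → β) (hrow : ∀ i, Function.Surjective (L i))
    (hcol : ∀ a, Function.Injective (fun i ↦ L i a)) (b : β) :
    #{a | ∀ i, L i a ≠ b} ≤ card α - card ι := by
  choose pos hpos using fun i ↦ hrow i b
  have hinj : Function.Injective pos := fun i i' h ↦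
    hcol (pos i) (show L i (pos i) = L i' (pos i) by rw [hpos, h, hpos])
  have hsub : ({a | ∀ i, L i a ≠ b} : Finset α) ⊆ (univ.image pos)ᶜ := by
    intro a ha
    simp only [mem_filter, mem_univ, true_and] at ha
    simp only [mem_compl, mem_image, mem_univ, true_and, not_exists]
    rintro i rfl
    exact ha i (hpos i)
  calc #{a | ∀ i, L i a ≠ b} ≤ #(univ.image pos)ᶜ := card_le_card hsub
    _ = card α - card ι := by rw [card_compl, card_image_of_injective _ hinj, card_univ]

/-- The 'missing symbol' relation of a k×n Latin rectangle with k < n satisfies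
Hall's condition: any set A of columns misses at least |A| symbols in total. -/
theorem stmt_16 (k n : ℕ) (hk : k < n) (L : Fin k → Fin n → Fin n)
    (hrow : ∀ i, Function.Bijective (L i))
    (hcol : ∀ j : Fin n, Function.Injective (fun i => L i j)) :
    ∀ A : Finset (Fin n),
      A.card ≤ (A.biUnion (fun j => Finset.univ.filter (fun s => ∀ i, L i j ≠ s))).card := by
  refine card_le_card_biUnion_of_degree_le _ (Nat.sub_pos_of_lt hk) (fun j ↦ ?_) (fun s ↦ ?_)
  · simpa using Fintype.card_sub_card_le_card_filter_forall_ne (fun i ↦ L i j)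
  · simpa using Fintype.card_filter_forall_ne_le_card_sub L (fun i ↦ (hrow i).surjective) hcol s
end

section
/- If every row and every column of an n×n 0-1 matrix M over ℕ has exactly k ones, then M can be written as a sum of k permutation matrices (Birkhoff–von Neumann / König for regular bipartite graphs); in particular the incidence matrix of a k×n Latin rectangle is a sum of k permutation matrices. -/
/-!
Hall's marriage theorem applied to the support of `M` gives a permutation `σ` with
`M i (σ i) ≠ 0` for all `i`: a set `s` of rows carries mass `k * #s`, all of which lies in
the columns meeting `s`, and those columns carry mass at most `k` each. Subtracting the
permutation matrix of `σ` leaves a matrix with line sums `k - 1`, and induction on `k` concludes.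
-/

open Finset Equiv

namespace Equiv.Perm

variable {ι R : Type*} [DecidableEq ι]

lemma permMatrix_apply [Zero R] [One R] (σ : Perm ι) (i j : ι) :
    σ.permMatrix R i j = if σ i = j then 1 else 0 := by
  simp [PEquiv.toMatrix_apply, Equiv.toPEquiv_apply]

variable [Fintype ι]

lemma sum_permMatrix_row [AddCommMonoid R] [One R] (σ : Perm ι) (i : ι) :
    ∑ j, σ.permMatrix R i j = 1 := by
  simp

lemma sum_permMatrix_col [AddCommMonoid R] [One R] (σ : Perm ι) (j : ι) :
    ∑ i, σ.permMatrix R i j = 1 := by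
  simp [← Equiv.eq_symm_apply]

end Equiv.Perm

namespace Matrix

variable {ι : Type*} [DecidableEq ι] {M : Matrix ι ι ℕ} {k : ℕ}

lemma permMatrix_le_of_apply_ne_zero {σ : Perm ι} (hσ : ∀ i, M i (σ i) ≠ 0) (i j : ι) :
    σ.permMatrix ℕ i j ≤ M i j := by
  rw [Perm.permMatrix_apply]
  split_ifs with h
  · exact Nat.one_le_iff_ne_zero.mpr (h ▸ hσ i)
  · exact Nat.zero_le _

variable [Fintype ι]

lemma card_le_card_biUnion_support (hk : 0 < k) (hrow : ∀ i, ∑ j, M i j = k)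
    (hcol : ∀ j, ∑ i, M i j = k) (s : Finset ι) :
    #s ≤ #(s.biUnion fun i => {j | M i j ≠ 0}) := by
  set N := s.biUnion fun i => {j | M i j ≠ 0}
  refine le_of_mul_le_mul_left ?_ hk
  calc k * #s = ∑ i ∈ s, ∑ j with M i j ≠ 0, M i j := by
        simp [sum_filter_ne_zero, hrow, mul_comm]
    _ ≤ ∑ i ∈ s, ∑ j ∈ N, M i j :=
        sum_le_sum fun i hi =>
          sum_le_sum_of_subset (subset_biUnion_of_mem (fun i => {j | M i j ≠ 0}) hi)
    _ = ∑ j ∈ N, ∑ i ∈ s, M i j := sum_comm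
    _ ≤ ∑ j ∈ N, ∑ i, M i j := sum_le_sum fun j _ => sum_le_sum_of_subset (subset_univ s)
    _ = k * #N := by simp [hcol, mul_comm]

lemma exists_perm_apply_ne_zero (hk : 0 < k) (hrow : ∀ i, ∑ j, M i j = k)
    (hcol : ∀ j, ∑ i, M i j = k) : ∃ σ : Perm ι, ∀ i, M i (σ i) ≠ 0 := by
  obtain ⟨f, hf, hfM⟩ := (all_card_le_biUnion_card_iff_exists_injective _).mp
    (card_le_card_biUnion_support hk hrow hcol)
  exact ⟨.ofBijective f (Finite.injective_iff_bijective.mp hf), by simpa using hfM⟩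

lemma exists_eq_sum_permMatrix (hrow : ∀ i, ∑ j, M i j = k) (hcol : ∀ j, ∑ i, M i j = k) :
    ∃ σ : Fin k → Perm ι, M = ∑ t, (σ t).permMatrix ℕ := by
  induction k generalizing M with
  | zero =>
    refine ⟨finZeroElim, ?_⟩
    ext i j
    simpa using (sum_eq_zero_iff.mp (hrow i)) j (mem_univ j)
  | succ k ih =>
    obtain ⟨σ₀, hσ₀⟩ := exists_perm_apply_ne_zero k.succ_pos hrow hcol
    have hle := permMatrix_le_of_apply_ne_zero hσ₀
    obtain ⟨σ, hσ⟩ := ih (M := M - σ₀.permMatrix ℕ)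
      (fun i => by
        simp only [sub_apply]
        rw [sum_tsub_distrib _ fun j _ => hle i j, hrow, Perm.sum_permMatrix_row,
          Nat.add_sub_cancel])
      (fun j => by
        simp only [sub_apply]
        rw [sum_tsub_distrib _ fun i _ => hle i j, hcol, Perm.sum_permMatrix_col,
          Nat.add_sub_cancel])
    refine ⟨Fin.cons σ₀ σ, ?_⟩
    rw [Fin.sum_univ_succ, Fin.cons_zero]
    simp only [Fin.cons_succ, ← hσ]
    ext i j
    exact (Nat.add_sub_of_le (hle i j)).symm

end Matrix

theorem stmt_18_general (n k : ℕ) (M : Matrix (Fin n) (Fin n) ℕ)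
    (hrow : ∀ i, ∑ j, M i j = k)
    (hcol : ∀ j, ∑ i, M i j = k) :
    ∃ σ : Fin k → Equiv.Perm (Fin n),
      M = ∑ t : Fin k, Matrix.of (fun i j => if σ t i = j then (1 : ℕ) else 0) := by
  obtain ⟨σ, hσ⟩ := Matrix.exists_eq_sum_permMatrix hrow hcol
  refine ⟨σ, hσ.trans <| sum_congr rfl fun t _ => ?_⟩
  ext i j
  exact Equiv.Perm.permMatrix_apply _ i j

/-- A 0-1 matrix over ℕ whose every row and column has exactly k ones is a sum
of k permutation matrices. -/
theorem stmt_18 (n k : ℕ) (M : Matrix (Fin n) (Fin n) ℕ)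
    (h01 : ∀ i j, M i j = 0 ∨ M i j = 1)
    (hrow : ∀ i, ∑ j, M i j = k)
    (hcol : ∀ j, ∑ i, M i j = k) :
    ∃ σ : Fin k → Equiv.Perm (Fin n),
      M = ∑ t : Fin k, Matrix.of (fun i j => if σ t i = j then (1 : ℕ) else 0) :=
  stmt_18_general n k M hrow hcol
end
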